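/- Let H be an n×n symmetric positive definite matrix and let X = (X_t)_{t∈ℝ} be a centred, square-integrable strictly stationary n-dimensional process with continuous paths almost surely and autocovariance γ(s) = E[X_s X_0ᵀ] (so γ(−s) = γ(s)ᵀ). Define G_t = X_t − X_0 + H ∫_0^t X_s ds and v(t) = E[G_t G_tᵀ]. With B_t = ∫_0^t (γ(s) − γ(s)ᵀ) ds, C_t = ∫_0^t ∫_0^t γ(s−u) du ds, and D_t = v(t) − 2γ(0) + γ(t) + γ(t)ᵀ, the continuous-time algebraic Riccati equation B_tᵀ H + H B_t − H C_t H + D_t = 0 holds for every t ≥ 0. -/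

import Mathlib

set_option autoImplicit false

open MeasureTheory Filter Finset Matrix Topology

variable {Ω : Type*}

/-- Two `ℝ`-indexed `ℝⁿ`-valued processes have the same finite-dimensional
distributions. -/
def SameFDDR {n : ℕ} [MeasurableSpace Ω] (μ : Measure Ω)
    (X Y : ℝ → Ω → (Fin n → ℝ)) : Prop :=
  ∀ (m : ℕ) (t : Fin m → ℝ),
    μ.map (fun ω (i : Fin m) => X (t i) ω) = μ.map (fun ω (i : Fin m) => Y (t i) ω)

/-- Strict stationarity of an `ℝ`-indexed process. -/
def IsStationaryR {n : ℕ} [MeasurableSpace Ω] (μ : Measure Ω)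
    (X : ℝ → Ω → (Fin n → ℝ)) : Prop :=
  ∀ s : ℝ, SameFDDR μ (fun t => X (t + s)) X

/-! Write `G_t = A + H I` with `A = X_t - X_0` and `I = ∫_0^t X_s ds`. Bilinearity of the
second-moment matrix `(U, V) ↦ E[U Vᵀ]` gives
`v(t) = E[A Aᵀ] + E[A Iᵀ] H + H E[I Aᵀ] + H E[I Iᵀ] H`.
Stationarity turns every `E[X_a X_bᵀ]` into `γ(a - b)`, and Fubini's theorem (justified by a
jointly measurable version of `X` and its bounded second moments) moves the expectation inside
the time integrals: `E[A Aᵀ] = 2γ(0) - γ(t) - γ(t)ᵀ`, `E[A Iᵀ] = B_t` and `E[I Iᵀ] = C_t`.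
Hence `D_t = B_t H + H B_tᵀ + H C_t H`, and the Riccati identity reduces to `B_tᵀ = -B_t`
and `Hᵀ = H`. -/

section CrossMoment

variable {ι κ ℓ : Type*} [MeasurableSpace Ω] {μ : Measure Ω}

noncomputable def crossMoment (μ : Measure Ω) (U : Ω → ι → ℝ) (V : Ω → κ → ℝ) : Matrix ι κ ℝ :=
  Matrix.of fun i j => ∫ ω, U ω i * V ω j ∂μ

theorem crossMoment_transpose (U : Ω → ι → ℝ) (V : Ω → κ → ℝ) :
    (crossMoment μ U V)ᵀ = crossMoment μ V U := by
  ext i j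
  simp only [crossMoment, transpose_apply, of_apply, mul_comm]

theorem crossMoment_add_left {U U' : Ω → ι → ℝ} {V : Ω → κ → ℝ}
    (hU : ∀ i, MemLp (fun ω => U ω i) 2 μ) (hU' : ∀ i, MemLp (fun ω => U' ω i) 2 μ)
    (hV : ∀ j, MemLp (fun ω => V ω j) 2 μ) :
    crossMoment μ (U + U') V = crossMoment μ U V + crossMoment μ U' V := by
  ext i j
  simp only [crossMoment, of_apply, Matrix.add_apply, Pi.add_apply, add_mul]
  exact integral_add ((hU i).integrable_mul (hV j)) ((hU' i).integrable_mul (hV j))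

theorem crossMoment_sub_left {U U' : Ω → ι → ℝ} {V : Ω → κ → ℝ}
    (hU : ∀ i, MemLp (fun ω => U ω i) 2 μ) (hU' : ∀ i, MemLp (fun ω => U' ω i) 2 μ)
    (hV : ∀ j, MemLp (fun ω => V ω j) 2 μ) :
    crossMoment μ (U - U') V = crossMoment μ U V - crossMoment μ U' V := by
  ext i j
  simp only [crossMoment, of_apply, Matrix.sub_apply, Pi.sub_apply, sub_mul]
  exact integral_sub ((hU i).integrable_mul (hV j)) ((hU' i).integrable_mul (hV j))

theorem crossMoment_mulVec_left [Fintype ι] (P : Matrix ℓ ι ℝ) {U : Ω → ι → ℝ}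
    {V : Ω → κ → ℝ} (hU : ∀ i, MemLp (fun ω => U ω i) 2 μ)
    (hV : ∀ j, MemLp (fun ω => V ω j) 2 μ) :
    crossMoment μ (fun ω => P *ᵥ U ω) V = P * crossMoment μ U V := by
  ext k j
  simp only [crossMoment, of_apply, Matrix.mul_apply, mulVec, dotProduct, Finset.sum_mul,
    mul_assoc]
  rw [integral_finsetSum]
  · simp only [integral_const_mul]
  · exact fun i _ => ((hU i).integrable_mul (hV j)).const_mul (P k i)

theorem crossMoment_add_right {U : Ω → ι → ℝ} {V V' : Ω → κ → ℝ}
    (hU : ∀ i, MemLp (fun ω => U ω i) 2 μ) (hV : ∀ j, MemLp (fun ω => V ω j) 2 μ)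
    (hV' : ∀ j, MemLp (fun ω => V' ω j) 2 μ) :
    crossMoment μ U (V + V') = crossMoment μ U V + crossMoment μ U V' := by
  rw [← crossMoment_transpose, crossMoment_add_left hV hV' hU, transpose_add,
    crossMoment_transpose, crossMoment_transpose]

theorem crossMoment_sub_right {U : Ω → ι → ℝ} {V V' : Ω → κ → ℝ}
    (hU : ∀ i, MemLp (fun ω => U ω i) 2 μ) (hV : ∀ j, MemLp (fun ω => V ω j) 2 μ)
    (hV' : ∀ j, MemLp (fun ω => V' ω j) 2 μ) :
    crossMoment μ U (V - V') = crossMoment μ U V - crossMoment μ U V' := by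
  rw [← crossMoment_transpose, crossMoment_sub_left hV hV' hU, transpose_sub,
    crossMoment_transpose, crossMoment_transpose]

theorem crossMoment_mulVec_right [Fintype κ] (P : Matrix ℓ κ ℝ) {U : Ω → ι → ℝ}
    {V : Ω → κ → ℝ} (hU : ∀ i, MemLp (fun ω => U ω i) 2 μ)
    (hV : ∀ j, MemLp (fun ω => V ω j) 2 μ) :
    crossMoment μ U (fun ω => P *ᵥ V ω) = crossMoment μ U V * Pᵀ := by
  rw [← crossMoment_transpose, crossMoment_mulVec_left P hV hU, transpose_mul,
    crossMoment_transpose]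

theorem memLp_mulVec_apply [Fintype ι] (P : Matrix κ ι ℝ) {U : Ω → ι → ℝ}
    (hU : ∀ i, MemLp (fun ω => U ω i) 2 μ) (k : κ) :
    MemLp (fun ω => (P *ᵥ U ω) k) 2 μ :=
  memLp_finsetSum _ fun i _ => (hU i).const_mul (P k i)

theorem crossMoment_add_mulVec_self [Fintype ι] {A : Ω → κ → ℝ} {I : Ω → ι → ℝ}
    (P : Matrix κ ι ℝ) (hA : ∀ k, MemLp (fun ω => A ω k) 2 μ)
    (hI : ∀ i, MemLp (fun ω => I ω i) 2 μ) :
    crossMoment μ (A + fun ω => P *ᵥ I ω) (A + fun ω => P *ᵥ I ω) =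
      crossMoment μ A A + crossMoment μ A I * Pᵀ + P * crossMoment μ I A
        + P * crossMoment μ I I * Pᵀ := by
  have hPI := memLp_mulVec_apply P hI
  have hG : ∀ k, MemLp (fun ω => (A + fun ω => P *ᵥ I ω) ω k) 2 μ := fun k => (hA k).add (hPI k)
  rw [crossMoment_add_left hA hPI hG, crossMoment_add_right hA hA hPI,
    crossMoment_add_right hPI hA hPI, crossMoment_mulVec_right P hA hI,
    crossMoment_mulVec_left P hI hA, crossMoment_mulVec_left P hI hPI,
    crossMoment_mulVec_right P hI hI, Matrix.mul_assoc]
  abel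

end CrossMoment

theorem IsStationaryR.crossMoment_add {n : ℕ} [MeasurableSpace Ω] {μ : Measure Ω}
    {X : ℝ → Ω → Fin n → ℝ} (hX : IsStationaryR μ X) (hmX : ∀ t, Measurable (X t))
    (a b s : ℝ) : crossMoment μ (X (a + s)) (X (b + s)) = crossMoment μ (X a) (X b) := by
  ext i j
  have hmap := hX s 2 ![a, b]
  have hf : Measurable fun y : Fin 2 → Fin n → ℝ => y 0 i * y 1 j := by fun_prop
  have hshift : Measurable fun ω (m : Fin 2) => X (![a, b] m + s) ω :=
    measurable_pi_lambda _ fun m => hmX _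
  have hfix : Measurable fun ω (m : Fin 2) => X (![a, b] m) ω :=
    measurable_pi_lambda _ fun m => hmX _
  have key := congrArg (fun ν => ∫ y, y 0 i * y 1 j ∂ν) hmap
  simp only at key
  rw [integral_map hshift.aemeasurable hf.aestronglyMeasurable,
    integral_map hfix.aemeasurable hf.aestronglyMeasurable] at key
  simpa [crossMoment] using key

section MeasurableVersion

variable {T E : Type*} [MeasurableSpace Ω] [MeasurableSpace T] [MeasurableSpace E]
  {μ : Measure Ω}

def HasMeasurableVersion (μ : Measure Ω) (U : T → Ω → E) : Prop :=
  ∃ Y : T → Ω → E, Measurable (Function.uncurry Y) ∧ ∀ᵐ ω ∂μ, ∀ s, Y s ω = U s ω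

theorem hasMeasurableVersion_of_ae_continuous [TopologicalSpace T]
    [TopologicalSpace.MetrizableSpace T] [SecondCountableTopology T] [OpensMeasurableSpace T]
    [TopologicalSpace E] [TopologicalSpace.PseudoMetrizableSpace E] [BorelSpace E] [Zero E]
    {U : T → Ω → E} (hmU : ∀ s, Measurable (U s)) (hU : ∀ᵐ ω ∂μ, Continuous fun s => U s ω) :
    HasMeasurableVersion μ U := by
  classical
  obtain ⟨N, hUN, hNm, hN⟩ := exists_measurable_superset_of_null (ae_iff.1 hU)
  refine ⟨fun s ω => if ω ∈ N then 0 else U s ω, ?_, ?_⟩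
  · refine measurable_uncurry_of_continuous_of_measurable (fun ω => ?_)
      fun s => Measurable.ite hNm measurable_const (hmU s)
    by_cases hω : ω ∈ N
    · simpa [hω] using continuous_const
    · simpa [hω] using not_not.1 fun h => hω (hUN h)
  · filter_upwards [measure_eq_zero_iff_ae_notMem.1 hN] with ω hω s
    simp [hω]

theorem HasMeasurableVersion.aestronglyMeasurable_apply {ι T' : Type*} [MeasurableSpace T']
    {ρ : Measure T'} [SFinite ρ] {X : T → Ω → ι → ℝ} (hX : HasMeasurableVersion μ X) (k : ι)
    {e : T' → T} (he : Measurable e) :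
    AEStronglyMeasurable (fun p : Ω × T' => X (e p.2) p.1 k) (μ.prod ρ) := by
  obtain ⟨Y, hY, hYX⟩ := hX
  have hYm : Measurable fun p : Ω × T' => Y (e p.2) p.1 k :=
    (measurable_pi_apply k).comp (hY.comp ((he.comp measurable_snd).prodMk measurable_fst))
  refine hYm.aestronglyMeasurable.congr ?_
  filter_upwards [Measure.quasiMeasurePreserving_fst.ae hYX] with p hp
  rw [hp]

end MeasurableVersion

theorem integral_norm_mul_le_of_memLp [MeasurableSpace Ω] {μ : Measure Ω} {f g : Ω → ℝ}
    (hf : MemLp f 2 μ) (hg : MemLp g 2 μ) :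
    ∫ ω, ‖f ω * g ω‖ ∂μ ≤ ∫ ω, f ω ^ 2 ∂μ + ∫ ω, g ω ^ 2 ∂μ := by
  rw [← integral_add hf.integrable_sq hg.integrable_sq]
  refine integral_mono (hf.integrable_mul hg).norm (hf.integrable_sq.add hg.integrable_sq)
    fun ω => ?_
  rw [Real.norm_eq_abs, abs_mul]
  nlinarith [sq_nonneg (|f ω| - |g ω|), sq_abs (f ω), sq_abs (g ω)]

section Fubini

variable {ι κ T : Type*} [MeasurableSpace Ω] [MeasurableSpace T] {μ : Measure Ω} [SFinite μ]
  {ρ : Measure T} [IsFiniteMeasure ρ]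

theorem integrable_prod_mul_of_memLp {U V : T → Ω → ℝ} {MU MV : ℝ}
    (hU : AEStronglyMeasurable (fun p : Ω × T => U p.2 p.1) (μ.prod ρ))
    (hV : AEStronglyMeasurable (fun p : Ω × T => V p.2 p.1) (μ.prod ρ))
    (hU2 : ∀ s, MemLp (U s) 2 μ) (hV2 : ∀ s, MemLp (V s) 2 μ)
    (hMU : ∀ s, ∫ ω, U s ω ^ 2 ∂μ ≤ MU) (hMV : ∀ s, ∫ ω, V s ω ^ 2 ∂μ ≤ MV) :
    Integrable (fun p : Ω × T => U p.2 p.1 * V p.2 p.1) (μ.prod ρ) := by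
  refine (integrable_prod_iff' (hU.mul hV)).2
    ⟨ae_of_all _ fun s => (hU2 s).integrable_mul (hV2 s), ?_⟩
  refine Integrable.of_bound (hU.mul hV).norm.prod_swap.integral_prod_right' (MU + MV)
    (ae_of_all _ fun s => ?_)
  rw [Real.norm_of_nonneg (integral_nonneg fun ω => norm_nonneg _)]
  exact (integral_norm_mul_le_of_memLp (hU2 s) (hV2 s)).trans (add_le_add (hMU s) (hMV s))

variable {X : T → Ω → ι → ℝ} {Z : Ω → κ → ℝ}

theorem integrable_prod_apply_mul_apply (hX : HasMeasurableVersion μ X)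
    (hX2 : ∀ s k, MemLp (fun ω => X s ω k) 2 μ)
    (hXb : ∀ k, BddAbove (Set.range fun s => ∫ ω, X s ω k ^ 2 ∂μ))
    (hZ : ∀ j, MemLp (fun ω => Z ω j) 2 μ) (k : ι) (j : κ) :
    Integrable (fun p : Ω × T => X p.2 p.1 k * Z p.1 j) (μ.prod ρ) := by
  obtain ⟨M, hM⟩ := hXb k
  exact integrable_prod_mul_of_memLp (V := fun _ ω => Z ω j)
    (hX.aestronglyMeasurable_apply k measurable_id) (hZ j).aestronglyMeasurable.comp_fst
    (fun s => hX2 s k) (fun _ => hZ j) (fun s => hM ⟨s, rfl⟩) fun _ => le_rfl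

theorem integrable_crossMoment_apply (hX : HasMeasurableVersion μ X)
    (hX2 : ∀ s k, MemLp (fun ω => X s ω k) 2 μ)
    (hXb : ∀ k, BddAbove (Set.range fun s => ∫ ω, X s ω k ^ 2 ∂μ))
    (hZ : ∀ j, MemLp (fun ω => Z ω j) 2 μ) (k : ι) (j : κ) :
    Integrable (fun s => crossMoment μ (X s) Z k j) ρ :=
  (integrable_prod_apply_mul_apply hX hX2 hXb hZ k j).integral_prod_right

theorem crossMoment_integral_left (hX : HasMeasurableVersion μ X)
    (hX2 : ∀ s k, MemLp (fun ω => X s ω k) 2 μ)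
    (hXb : ∀ k, BddAbove (Set.range fun s => ∫ ω, X s ω k ^ 2 ∂μ))
    (hZ : ∀ j, MemLp (fun ω => Z ω j) 2 μ) :
    crossMoment μ (fun ω k => ∫ s, X s ω k ∂ρ) Z =
      Matrix.of fun k j => ∫ s, crossMoment μ (X s) Z k j ∂ρ := by
  ext k j
  simp only [crossMoment, of_apply, ← integral_mul_const]
  exact integral_integral_swap (integrable_prod_apply_mul_apply hX hX2 hXb hZ k j)

theorem memLp_integral_apply (hX : HasMeasurableVersion μ X)
    (hX2 : ∀ s k, MemLp (fun ω => X s ω k) 2 μ)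
    (hXb : ∀ k, BddAbove (Set.range fun s => ∫ ω, X s ω k ^ 2 ∂μ)) (k : ι) :
    MemLp (fun ω => ∫ s, X s ω k ∂ρ) 2 μ := by
  obtain ⟨M, hM⟩ := hXb k
  have hprod : Integrable (fun p : Ω × T × T => X p.2.1 p.1 k * X p.2.2 p.1 k)
      (μ.prod (ρ.prod ρ)) :=
    integrable_prod_mul_of_memLp (hX.aestronglyMeasurable_apply k measurable_fst)
      (hX.aestronglyMeasurable_apply k measurable_snd) (fun p : T × T => hX2 p.1 k)
      (fun p : T × T => hX2 p.2 k) (fun p : T × T => hM ⟨p.1, rfl⟩)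
      fun p : T × T => hM ⟨p.2, rfl⟩
  -- `(∫ X_s dρ)² = ∫ X_s X_u d(ρ ⊗ ρ)`, which is integrable in `ω` by Fubini.
  refine (memLp_two_iff_integrable_sq
    (hX.aestronglyMeasurable_apply k measurable_id).integral_prod_right').2
    (hprod.integral_prod_left.congr (ae_of_all _ fun ω => ?_))
  exact (integral_prod_mul (fun s => X s ω k) fun s => X s ω k).trans (sq _).symm

end Fubini

section Covariance

variable {ι : Type*} [MeasurableSpace Ω] {μ : Measure Ω} {X : ℝ → Ω → ι → ℝ}
  {γ : ℝ → Matrix ι ι ℝ}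

theorem apply_sub_eq_apply_sub_of_crossMoment_eq
    (hcov : ∀ a b, crossMoment μ (X a) (X b) = γ (a - b)) (a b : ℝ) (i j : ι) :
    γ (a - b) i j = γ (b - a) j i := by
  rw [← hcov, ← hcov, ← crossMoment_transpose, transpose_apply]

theorem bddAbove_integral_sq_of_crossMoment_eq
    (hcov : ∀ a b, crossMoment μ (X a) (X b) = γ (a - b)) (k : ι) :
    BddAbove (Set.range fun s => ∫ ω, X s ω k ^ 2 ∂μ) := by
  refine ⟨γ 0 k k, ?_⟩
  rintro _ ⟨s, rfl⟩
  simp only [sq, ← sub_self s, ← hcov, crossMoment, of_apply, le_rfl]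

theorem crossMoment_increment_self (hcov : ∀ a b, crossMoment μ (X a) (X b) = γ (a - b))
    (hX2 : ∀ s k, MemLp (fun ω => X s ω k) 2 μ) (t : ℝ) :
    crossMoment μ (X t - X 0) (X t - X 0) = (2 : ℝ) • γ 0 - γ t - (γ t)ᵀ := by
  have hA : ∀ k, MemLp (fun ω => (X t - X 0) ω k) 2 μ := fun k => (hX2 t k).sub (hX2 0 k)
  have h0t : crossMoment μ (X 0) (X t) = (γ t)ᵀ := by
    rw [← crossMoment_transpose, hcov, sub_zero]
  rw [crossMoment_sub_left (hX2 t) (hX2 0) hA, crossMoment_sub_right (hX2 t) (hX2 t) (hX2 0),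
    crossMoment_sub_right (hX2 0) (hX2 t) (hX2 0), h0t, hcov, hcov, hcov, sub_self, sub_self,
    sub_zero, two_smul]
  abel

variable [SFinite μ] {κ : Type*} {Z : Ω → κ → ℝ} {a b : ℝ}

theorem crossMoment_intervalIntegral_left (hX : HasMeasurableVersion μ X)
    (hX2 : ∀ s k, MemLp (fun ω => X s ω k) 2 μ)
    (hXb : ∀ k, BddAbove (Set.range fun s => ∫ ω, X s ω k ^ 2 ∂μ))
    (hZ : ∀ j, MemLp (fun ω => Z ω j) 2 μ) (hab : a ≤ b) :
    crossMoment μ (fun ω k => ∫ s in a..b, X s ω k) Z =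
      Matrix.of fun k j => ∫ s in a..b, crossMoment μ (X s) Z k j := by
  simpa only [← intervalIntegral.integral_of_le hab] using
    crossMoment_integral_left (ρ := volume.restrict (Set.Ioc a b)) hX hX2 hXb hZ

theorem memLp_intervalIntegral_apply (hX : HasMeasurableVersion μ X)
    (hX2 : ∀ s k, MemLp (fun ω => X s ω k) 2 μ)
    (hXb : ∀ k, BddAbove (Set.range fun s => ∫ ω, X s ω k ^ 2 ∂μ)) (hab : a ≤ b) (k : ι) :
    MemLp (fun ω => ∫ s in a..b, X s ω k) 2 μ := by
  simpa only [← intervalIntegral.integral_of_le hab] using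
    memLp_integral_apply (ρ := volume.restrict (Set.Ioc a b)) hX hX2 hXb k

theorem intervalIntegrable_crossMoment_apply (hX : HasMeasurableVersion μ X)
    (hX2 : ∀ s k, MemLp (fun ω => X s ω k) 2 μ)
    (hXb : ∀ k, BddAbove (Set.range fun s => ∫ ω, X s ω k ^ 2 ∂μ))
    (hZ : ∀ j, MemLp (fun ω => Z ω j) 2 μ) (hab : a ≤ b) (k : ι) (j : κ) :
    IntervalIntegrable (fun s => crossMoment μ (X s) Z k j) volume a b :=
  (intervalIntegrable_iff_integrableOn_Ioc_of_le hab).2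
    (integrable_crossMoment_apply hX hX2 hXb hZ k j)

theorem crossMoment_intervalIntegral_increment
    (hcov : ∀ a b, crossMoment μ (X a) (X b) = γ (a - b)) (hX : HasMeasurableVersion μ X)
    (hX2 : ∀ s k, MemLp (fun ω => X s ω k) 2 μ) {t : ℝ} (ht : 0 ≤ t) :
    crossMoment μ (fun ω k => ∫ s in (0 : ℝ)..t, X s ω k) (X t - X 0) =
      Matrix.of fun i j => ∫ s in (0 : ℝ)..t, (γ s j i - γ s i j) := by
  have hXb := bddAbove_integral_sq_of_crossMoment_eq hcov
  have hint : ∀ a i j, IntervalIntegrable (fun s => crossMoment μ (X s) (X a) i j) volume 0 t :=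
    fun a => intervalIntegrable_crossMoment_apply hX hX2 hXb (hX2 a) ht
  have hγ : ∀ i j, IntervalIntegrable (fun s => γ s i j) volume 0 t := fun i j => by
    simpa only [hcov, sub_zero] using hint 0 i j
  ext i j
  rw [crossMoment_intervalIntegral_left (Z := X t - X 0) hX hX2 hXb
    (fun k => (hX2 t k).sub (hX2 0 k)) ht, of_apply, of_apply]
  calc ∫ s in (0 : ℝ)..t, crossMoment μ (X s) (X t - X 0) i j
      = ∫ s in (0 : ℝ)..t, (crossMoment μ (X s) (X t) i j - crossMoment μ (X s) (X 0) i j) := by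
        simp only [crossMoment_sub_right (hX2 _) (hX2 t) (hX2 0), Matrix.sub_apply]
    _ = (∫ s in (0 : ℝ)..t, γ (t - s) j i) - ∫ s in (0 : ℝ)..t, γ s i j := by
        rw [intervalIntegral.integral_sub (hint t i j) (hint 0 i j)]
        simp only [hcov, sub_zero, apply_sub_eq_apply_sub_of_crossMoment_eq hcov _ t]
    _ = ∫ s in (0 : ℝ)..t, (γ s j i - γ s i j) := by
        rw [intervalIntegral.integral_sub (hγ j i) (hγ i j),
          intervalIntegral.integral_comp_sub_left (fun s => γ s j i), sub_self, sub_zero]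

theorem crossMoment_intervalIntegral_self
    (hcov : ∀ a b, crossMoment μ (X a) (X b) = γ (a - b)) (hX : HasMeasurableVersion μ X)
    (hX2 : ∀ s k, MemLp (fun ω => X s ω k) 2 μ) {t : ℝ} (ht : 0 ≤ t) :
    crossMoment μ (fun ω k => ∫ s in (0 : ℝ)..t, X s ω k) (fun ω k => ∫ s in (0 : ℝ)..t, X s ω k) =
      Matrix.of fun i j => ∫ s in (0 : ℝ)..t, ∫ u in (0 : ℝ)..t, γ (s - u) i j := by
  have hXb := bddAbove_integral_sq_of_crossMoment_eq hcov
  have hI := memLp_intervalIntegral_apply hX hX2 hXb ht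
  ext i j
  rw [crossMoment_intervalIntegral_left hX hX2 hXb hI ht, of_apply, of_apply]
  refine intervalIntegral.integral_congr fun s _ => ?_
  rw [← crossMoment_transpose, crossMoment_intervalIntegral_left hX hX2 hXb (hX2 s) ht]
  simp only [transpose_apply, of_apply, hcov, apply_sub_eq_apply_sub_of_crossMoment_eq hcov _ s]

end Covariance

theorem stmt18_general {n : ℕ} [MeasurableSpace Ω] (μ : Measure Ω) [IsProbabilityMeasure μ]
    (H : Matrix (Fin n) (Fin n) ℝ) (hH : H.PosDef)
    (X : ℝ → Ω → (Fin n → ℝ))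
    (hmX : ∀ t, Measurable (X t))
    (hpaths : ∀ᵐ ω ∂μ, Continuous fun s => X s ω)
    (hX : IsStationaryR μ X)
    (hL2X : ∀ (t : ℝ) (i : Fin n), MemLp (fun ω => X t ω i) 2 μ)
    (γ : ℝ → Matrix (Fin n) (Fin n) ℝ)
    (hγ : ∀ t : ℝ, γ t = Matrix.of fun i j => ∫ ω, X t ω i * X 0 ω j ∂μ)
    (G : ℝ → Ω → (Fin n → ℝ))
    (hG : ∀ (t : ℝ) (ω : Ω), G t ω =
      X t ω - X 0 ω + H.mulVec (fun i => ∫ s in (0 : ℝ)..t, X s ω i))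
    (v : ℝ → Matrix (Fin n) (Fin n) ℝ)
    (hv : ∀ t : ℝ, v t = Matrix.of fun i j => ∫ ω, G t ω i * G t ω j ∂μ)
    (B C D : ℝ → Matrix (Fin n) (Fin n) ℝ)
    (hB : ∀ t : ℝ, B t = Matrix.of fun i j => ∫ s in (0 : ℝ)..t, (γ s i j - γ s j i))
    (hC : ∀ t : ℝ, C t = Matrix.of fun i j =>
      ∫ s in (0 : ℝ)..t, ∫ u in (0 : ℝ)..t, γ (s - u) i j)
    (hD : ∀ t : ℝ, D t = v t - (2 : ℝ) • γ 0 + γ t + (γ t)ᵀ) :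
    ∀ t : ℝ, 0 ≤ t → (B t)ᵀ * H + H * B t - H * C t * H + D t = 0 := by
  intro t ht
  have hcov : ∀ a b, crossMoment μ (X a) (X b) = γ (a - b) := fun a b => by
    have h := hX.crossMoment_add hmX (a - b) 0 b
    rw [sub_add_cancel, zero_add] at h
    rw [h, hγ]
    rfl
  have hver : HasMeasurableVersion μ X := hasMeasurableVersion_of_ae_continuous hmX hpaths
  have hI := memLp_intervalIntegral_apply hver hL2X (bddAbove_integral_sq_of_crossMoment_eq hcov) ht
  have hHt : Hᵀ = H := by simpa [IsHermitian] using hH.isHermitian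
  have hBt : (B t)ᵀ = -B t := by
    ext i j
    simp only [hB, transpose_apply, of_apply, Matrix.neg_apply]
    rw [← intervalIntegral.integral_neg]
    simp only [neg_sub]
  have hIA : crossMoment μ (fun ω k => ∫ s in (0 : ℝ)..t, X s ω k) (X t - X 0) = (B t)ᵀ := by
    rw [crossMoment_intervalIntegral_increment hcov hver hL2X ht, hB]
    rfl
  have hvt : v t = crossMoment μ (G t) (G t) := hv t
  have hGt : G t = (X t - X 0) + fun ω => H *ᵥ fun k => ∫ s in (0 : ℝ)..t, X s ω k :=
    funext (hG t)
  rw [hD, hvt, hGt, crossMoment_add_mulVec_self (A := X t - X 0) H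
    (fun k => (hL2X t k).sub (hL2X 0 k)) hI,
    crossMoment_increment_self hcov hL2X, ← crossMoment_transpose (U := fun ω k => _), hIA,
    transpose_transpose, crossMoment_intervalIntegral_self hcov hver hL2X ht, ← hC, hHt, hBt]
  noncomm_ring

/-- continuous-time algebraic Riccati equation.  For a centred
square-integrable strictly stationary `X` with a.s. continuous paths satisfying
the integrated Langevin equation with noise `G_t = X_t − X_0 + H ∫_0^t X_s ds`,
the matrices `B_t = ∫_0^t (γ(s) − γ(s)ᵀ) ds`, `C_t = ∫_0^t ∫_0^t γ(s−u) du ds`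
and `D_t = v(t) − 2γ(0) + γ(t) + γ(t)ᵀ` satisfy
`B_tᵀ H + H B_t − H C_t H + D_t = 0` for every `t ≥ 0`. -/
theorem stmt18 {n : ℕ} [MeasurableSpace Ω] (μ : Measure Ω) [IsProbabilityMeasure μ]
    (H : Matrix (Fin n) (Fin n) ℝ) (hH : H.PosDef)
    (X : ℝ → Ω → (Fin n → ℝ))
    (hmX : ∀ t, Measurable (X t))
    (hpaths : ∀ᵐ ω ∂μ, Continuous fun s => X s ω)
    (hX : IsStationaryR μ X)
    (hcent : ∀ (t : ℝ) (i : Fin n), ∫ ω, X t ω i ∂μ = 0)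
    (hL2X : ∀ (t : ℝ) (i : Fin n), MemLp (fun ω => X t ω i) 2 μ)
    (γ : ℝ → Matrix (Fin n) (Fin n) ℝ)
    (hγ : ∀ t : ℝ, γ t = Matrix.of fun i j => ∫ ω, X t ω i * X 0 ω j ∂μ)
    (G : ℝ → Ω → (Fin n → ℝ))
    (hG : ∀ (t : ℝ) (ω : Ω), G t ω =
      X t ω - X 0 ω + H.mulVec (fun i => ∫ s in (0 : ℝ)..t, X s ω i))
    (v : ℝ → Matrix (Fin n) (Fin n) ℝ)
    (hv : ∀ t : ℝ, v t = Matrix.of fun i j => ∫ ω, G t ω i * G t ω j ∂μ)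
    (B C D : ℝ → Matrix (Fin n) (Fin n) ℝ)
    (hB : ∀ t : ℝ, B t = Matrix.of fun i j => ∫ s in (0 : ℝ)..t, (γ s i j - γ s j i))
    (hC : ∀ t : ℝ, C t = Matrix.of fun i j =>
      ∫ s in (0 : ℝ)..t, ∫ u in (0 : ℝ)..t, γ (s - u) i j)
    (hD : ∀ t : ℝ, D t = v t - (2 : ℝ) • γ 0 + γ t + (γ t)ᵀ) :
    ∀ t : ℝ, 0 ≤ t → (B t)ᵀ * H + H * B t - H * C t * H + D t = 0 :=
  stmt18_general μ H hH X hmX hpaths hX hL2X γ hγ G hG v hv B C D hB hC hD
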